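/- Let G = (V,E) be a finite simple graph on p vertices and σ an ordering of V. If either G is not a homogeneous graph, or G is a homogeneous graph but σ is not a Hasse tree based elimination scheme for G, then there exists a maximal clique C of G and a matrix Σ ∈ P_{G_σ}, with modified Cholesky decomposition Σ = LDLᵀ, such that det((Σ⁻¹)_{σ(C)}) ≠ ∏_{i ∈ σ(C)} 1/D_{ii}, where (Σ⁻¹)_{σ(C)} denotes the principal submatrix of Σ⁻¹ with rows and columns indexed by σ(C). -/

import Mathlib

/-! If `G` is not homogeneous, or `σ` is not a Hasse tree based elimination scheme, there are
adjacent vertices `u, v` with `σ u < σ v` and `N[u] ⊄ N[v]`; a maximal clique `C` through `u` and a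
vertex of `N[u] \ N[v]` then misses `v`. Take `Σ = L Lᵀ` (so `D = 1`) with `L = 1 + E_{σ v, σ u}`.
Then `Σ⁻¹ = (1 - E_{σ u, σ v}) (1 - E_{σ v, σ u})`, whose principal submatrix on `σ(C)` is diagonal
with a single entry `2`, at `σ u`; so its determinant is `2 ≠ 1 = ∏ 1 / D_ii`. -/

open Matrix BigOperators

/-- The closed neighborhood `N[v]` of a vertex `v`. -/
def cNbhd {V : Type*} (G : SimpleGraph V) (v : V) : Set V :=
  {u | u = v ∨ G.Adj u v}

/-- A graph is homogeneous (co-chordal) if for every edge `(v,v')`, the closed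
neighborhoods are nested. -/
def Homogeneous {V : Type*} (G : SimpleGraph V) : Prop :=
  ∀ v v' : V, G.Adj v v' → cNbhd G v' ⊆ cNbhd G v ∨ cNbhd G v ⊆ cNbhd G v'

/-- `σ` is a Hasse tree based elimination scheme: whenever `u → v`
(`N[v] ⊆ N[u]`) and `N[u] ≠ N[v]`, one has `σ(u) > σ(v)`. -/
def HasseElimScheme {V : Type*} {p : ℕ} (G : SimpleGraph V) (σ : V ≃ Fin p) : Prop :=
  ∀ u v : V, cNbhd G v ⊆ cNbhd G u → cNbhd G u ≠ cNbhd G v → σ v < σ u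

/-- `σ` is a perfect vertex elimination scheme for `G`. -/
def PerfectElimScheme {V : Type*} {p : ℕ} (G : SimpleGraph V) (σ : V ≃ Fin p) : Prop :=
  ∀ i j k : Fin p, i < j → j < k →
    G.Adj (σ.symm j) (σ.symm i) → G.Adj (σ.symm k) (σ.symm i) →
      G.Adj (σ.symm k) (σ.symm j)

/-- `G` has an induced cycle on at least `4` vertices. -/
def HasInducedCycleGE4 {V : Type*} (G : SimpleGraph V) : Prop :=
  ∃ (n : ℕ) (f : Fin n → V), 4 ≤ n ∧ Function.Injective f ∧
    ∀ i j : Fin n, G.Adj (f i) (f j) ↔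
      (((i : ℕ) + 1) % n = (j : ℕ) ∨ ((j : ℕ) + 1) % n = (i : ℕ))

/-- A graph is decomposable (chordal) if it has no induced cycle of length `≥ 4`. -/
def Decomposable {V : Type*} (G : SimpleGraph V) : Prop := ¬ HasInducedCycleGE4 G

/-- `G` has an induced path on `4` vertices. -/
def HasInducedPath4 {V : Type*} (G : SimpleGraph V) : Prop :=
  ∃ a b c d : V, a ≠ b ∧ a ≠ c ∧ a ≠ d ∧ b ≠ c ∧ b ≠ d ∧ c ≠ d ∧
    G.Adj a b ∧ G.Adj b c ∧ G.Adj c d ∧ ¬ G.Adj a c ∧ ¬ G.Adj a d ∧ ¬ G.Adj b d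

/-- `G` has an induced cycle on `4` vertices. -/
def HasInducedCycle4 {V : Type*} (G : SimpleGraph V) : Prop :=
  ∃ a b c d : V, a ≠ b ∧ a ≠ c ∧ a ≠ d ∧ b ≠ c ∧ b ≠ d ∧ c ≠ d ∧
    G.Adj a b ∧ G.Adj b c ∧ G.Adj c d ∧ G.Adj d a ∧ ¬ G.Adj a c ∧ ¬ G.Adj b d

/-- `C` is a maximal clique of `G`. -/
def IsMaxClique {V : Type*} (G : SimpleGraph V) (C : Finset V) : Prop :=
  G.IsClique (C : Set V) ∧
    ∀ C' : Finset V, G.IsClique (C' : Set V) → C ⊆ C' → C = C'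

/-- Membership in the class `𝓛_{G_σ}`: unit diagonal, and `L i j = 0` whenever
`i < j` or the corresponding vertices are not adjacent. -/
def memL {V : Type*} {p : ℕ} (G : SimpleGraph V) (σ : V ≃ Fin p)
    (L : Matrix (Fin p) (Fin p) ℝ) : Prop :=
  (∀ i, L i i = 1) ∧
    ∀ i j : Fin p, i ≠ j → (i < j ∨ ¬ G.Adj (σ.symm i) (σ.symm j)) → L i j = 0

/-- Membership in the class `P_{G_σ}`: positive definite, with `A i j = 0` whenever
the corresponding vertices are distinct and not adjacent. -/
def memP {V : Type*} {p : ℕ} (G : SimpleGraph V) (σ : V ≃ Fin p)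
    (A : Matrix (Fin p) (Fin p) ℝ) : Prop :=
  A.PosDef ∧ ∀ i j : Fin p, i ≠ j → ¬ G.Adj (σ.symm i) (σ.symm j) → A i j = 0

/-- Lower triangular with unit diagonal. -/
def LowerUnitri {p : ℕ} (L : Matrix (Fin p) (Fin p) ℝ) : Prop :=
  (∀ i, L i i = 1) ∧ ∀ i j : Fin p, i < j → L i j = 0

/-- Diagonal matrix with positive diagonal entries. -/
def PosDiag {p : ℕ} (D : Matrix (Fin p) (Fin p) ℝ) : Prop :=
  (∀ i j : Fin p, i ≠ j → D i j = 0) ∧ ∀ i, 0 < D i i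

/-- Determinant of the principal submatrix of `A` with rows and columns in `S`. -/
noncomputable def principalDet {p : ℕ} (A : Matrix (Fin p) (Fin p) ℝ)
    (S : Finset (Fin p)) : ℝ :=
  (A.submatrix (fun x : S => (x : Fin p)) (fun x : S => (x : Fin p))).det

namespace Matrix

variable {n : Type*} [DecidableEq n] {i j : n}

theorem transpose_transvection (i j : n) (c : ℝ) :
    (transvection i j c)ᵀ = transvection j i c := by
  rw [transvection, transvection, transpose_add, transpose_one, transpose_single]

variable [Fintype n]

theorem inv_transvection (h : i ≠ j) (c : ℝ) :
    (transvection i j c)⁻¹ = transvection i j (-c) :=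
  inv_eq_right_inv <| by
    rw [transvection_mul_transvection_same _ _ h, add_neg_cancel, transvection_zero]

theorem posDef_transvection_mul_transpose (h : i ≠ j) (c : ℝ) :
    (transvection i j c * (transvection i j c)ᵀ).PosDef := by
  have hunit : IsUnit (transvection i j c) := by
    rw [isUnit_iff_isUnit_det, det_transvection_of_ne _ _ h]
    exact isUnit_one
  simpa only [conjTranspose_eq_transpose_of_trivial] using
    PosDef.mul_conjTranspose_self _ (vecMul_injective_of_isUnit hunit)

theorem transvection_mul_transpose_apply_eq_zero (c : ℝ) {k l : n} (hkl : k ≠ l)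
    (hij : ¬ (k = i ∧ l = j)) (hji : ¬ (k = j ∧ l = i)) :
    (transvection i j c * (transvection i j c)ᵀ) k l = 0 := by
  rw [transpose_transvection]
  simp only [transvection, mul_add, mul_one, add_mul, one_mul, single_mul_single_same,
    add_apply, one_apply_ne hkl, single_apply]
  grind

/-- Deleting row and column `i` of `(T Tᵀ)⁻¹ = (1 - c E_{ji}) (1 - c E_{ij})`, where
`T = transvection i j c`, leaves `diag (1, …, 1 + c², …, 1)`. -/
theorem inv_transvection_mul_transpose_apply (h : i ≠ j) (c : ℝ) {k l : n} (hk : k ≠ i)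
    (hl : l ≠ i) :
    (transvection i j c * (transvection i j c)ᵀ)⁻¹ k l =
      diagonal (1 + Pi.single j (c ^ 2)) k l := by
  rw [mul_inv_rev, transpose_transvection, inv_transvection h, inv_transvection h.symm]
  simp only [transvection, mul_add, mul_one, add_mul, one_mul, single_mul_single_same,
    add_apply, one_apply, single_apply, diagonal_apply, Pi.add_apply, Pi.one_apply,
    Pi.single_apply]
  grind

end Matrix

theorem principalDet_eq_prod_of_eq_diagonal {p : ℕ} {A : Matrix (Fin p) (Fin p) ℝ}
    {S : Finset (Fin p)} {d : Fin p → ℝ} (h : ∀ k ∈ S, ∀ l ∈ S, A k l = diagonal d k l) :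
    principalDet A S = ∏ k ∈ S, d k := by
  have hsub : A.submatrix (fun x : S => (x : Fin p)) (fun x : S => (x : Fin p)) =
      (diagonal d).submatrix (fun x : S => (x : Fin p)) (fun x : S => (x : Fin p)) := by
    ext k l
    exact h k k.2 l l.2
  rw [principalDet, hsub, submatrix_diagonal _ _ Subtype.val_injective, det_diagonal]
  exact Finset.prod_coe_sort S d

theorem lowerUnitri_transvection {p : ℕ} {i j : Fin p} (h : j < i) (c : ℝ) :
    LowerUnitri (transvection i j c) := by
  refine ⟨fun k => ?_, fun k l hkl => ?_⟩
  · rw [transvection, Matrix.add_apply, one_apply_eq, single_apply_of_ne, add_zero]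
    rintro ⟨rfl, rfl⟩
    exact lt_irrefl _ h
  · rw [transvection, Matrix.add_apply, one_apply_ne hkl.ne, single_apply_of_ne, add_zero]
    rintro ⟨rfl, rfl⟩
    exact hkl.asymm h

theorem posDiag_one {p : ℕ} : PosDiag (1 : Matrix (Fin p) (Fin p) ℝ) :=
  ⟨fun _ _ => one_apply_ne, fun _ => by simp⟩

section Graph

variable {V : Type*} (G : SimpleGraph V)

theorem exists_isMaxClique_superset [Finite V] {s : Finset V} (hs : G.IsClique (s : Set V)) :
    ∃ C : Finset V, s ⊆ C ∧ IsMaxClique G C := by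
  obtain ⟨C, hsC, hC⟩ :=
    Finite.exists_le_maximal (p := fun t : Finset V => G.IsClique (t : Set V)) hs
  exact ⟨C, hsC, hC.prop, fun C' hC' hCC' => le_antisymm hCC' (hC.2 hC' hCC')⟩

theorem exists_isMaxClique_mem_not_mem [Finite V] {u v : V}
    (h : ¬ cNbhd G u ⊆ cNbhd G v) : ∃ C : Finset V, IsMaxClique G C ∧ u ∈ C ∧ v ∉ C := by
  classical
  obtain ⟨w, hwu, hwv⟩ := Set.not_subset.1 h
  have hpair : G.IsClique (({u, w} : Finset V) : Set V) := by
    rw [Finset.coe_pair, SimpleGraph.isClique_pair]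
    rintro hne
    rcases hwu with rfl | hadj
    · exact absurd rfl hne
    · exact hadj.symm
  obtain ⟨C, hsub, hC⟩ := exists_isMaxClique_superset G hpair
  refine ⟨C, hC, hsub (by simp), fun hvC => hwv ?_⟩
  by_cases hwv' : w = v
  · exact Or.inl hwv'
  · exact Or.inr (hC.1 (hsub (by simp)) hvC hwv')

theorem exists_adj_lt_not_cNbhd_subset_of_not_homogeneous {p : ℕ} (σ : V ≃ Fin p)
    (h : ¬ Homogeneous G) :
    ∃ u v : V, G.Adj u v ∧ σ u < σ v ∧ ¬ cNbhd G u ⊆ cNbhd G v := by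
  simp only [Homogeneous, not_forall, not_or] at h
  obtain ⟨x, y, hxy, hyx, hxy'⟩ := h
  rcases lt_or_gt_of_ne (σ.injective.ne hxy.ne) with hlt | hlt
  · exact ⟨x, y, hxy, hlt, hxy'⟩
  · exact ⟨y, x, hxy.symm, hlt, hyx⟩

theorem exists_adj_lt_not_cNbhd_subset_of_not_hasseElimScheme {p : ℕ} (σ : V ≃ Fin p)
    (h : ¬ HasseElimScheme G σ) :
    ∃ u v : V, G.Adj u v ∧ σ u < σ v ∧ ¬ cNbhd G u ⊆ cNbhd G v := by
  simp only [HasseElimScheme, not_forall, not_lt] at h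
  obtain ⟨u, v, hvu, hne, hle⟩ := h
  have huv : u ≠ v := by rintro rfl; exact hne rfl
  have hadj : G.Adj u v := by
    rcases hvu (Or.inl rfl) with rfl | hadj
    · exact absurd rfl huv
    · exact hadj.symm
  exact ⟨u, v, hadj, hle.lt_of_ne (σ.injective.ne huv),
    fun huv' => hne (huv'.antisymm hvu)⟩

theorem exists_adj_lt_not_cNbhd_subset {p : ℕ} (σ : V ≃ Fin p)
    (h : ¬ (Homogeneous G ∧ HasseElimScheme G σ)) :
    ∃ u v : V, G.Adj u v ∧ σ u < σ v ∧ ¬ cNbhd G u ⊆ cNbhd G v := by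
  rw [not_and_or] at h
  exact h.elim (exists_adj_lt_not_cNbhd_subset_of_not_homogeneous G σ)
    (exists_adj_lt_not_cNbhd_subset_of_not_hasseElimScheme G σ)

end Graph

/-- Converse of the determinant characterization: if `G` is not homogeneous, or `σ`
is not a Hasse tree based elimination scheme, then there is a maximal clique `C` and
`Σ ∈ P_{G_σ}` with Cholesky decomposition `Σ = LDLᵀ` for which the clique
determinant identity fails. -/
theorem statement10 {V : Type*} [Fintype V] {p : ℕ} (G : SimpleGraph V) (σ : V ≃ Fin p)
    (h : ¬ (Homogeneous G ∧ HasseElimScheme G σ)) :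
    ∃ (C : Finset V) (A L D : Matrix (Fin p) (Fin p) ℝ),
      IsMaxClique G C ∧ memP G σ A ∧ LowerUnitri L ∧ PosDiag D ∧
      A = L * D * Lᵀ ∧
      principalDet A⁻¹ (C.image (fun v => σ v)) ≠
        ∏ i ∈ C.image (fun v => σ v), 1 / D i i := by
  obtain ⟨u, v, huv, hlt, hN⟩ := exists_adj_lt_not_cNbhd_subset G σ h
  obtain ⟨C, hC, huC, hvC⟩ := exists_isMaxClique_mem_not_mem G hN
  have hne : σ v ≠ σ u := hlt.ne'
  set L := transvection (σ v) (σ u) (1 : ℝ)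
  refine ⟨C, L * Lᵀ, L, 1, hC, ⟨posDef_transvection_mul_transpose hne 1, ?_⟩,
    lowerUnitri_transvection hlt 1, posDiag_one, by rw [mul_one], ?_⟩
  · intro k l hkl hnadj
    refine transvection_mul_transpose_apply_eq_zero 1 hkl ?_ ?_ <;> rintro ⟨rfl, rfl⟩
    · exact hnadj (by simpa using huv.symm)
    · exact hnadj (by simpa using huv)
  · have hCσ : ∀ k ∈ C.image (fun v => σ v), k ≠ σ v := by
      simp only [Finset.mem_image]
      rintro _ ⟨x, hx, rfl⟩ hxv
      exact hvC (σ.injective hxv ▸ hx)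
    rw [principalDet_eq_prod_of_eq_diagonal fun k hk l hl =>
        inv_transvection_mul_transpose_apply hne 1 (hCσ k hk) (hCσ l hl),
      Finset.prod_eq_single_of_mem (σ u) (Finset.mem_image_of_mem _ huC) fun k _ hk => by
        simp [hk]]
    norm_num
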